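/- Let w be a word over A = {x, y, e} that is irreducible with respect to the rewriting system e³ → e, xey → y, xe²y → x, xy → 1. Then the image of w in the monoid M presented by ⟨x, y, e | e³ = e, xey = y, xe²y = x, xy = 1⟩ is left-invertible if and only if w is either the empty word or a word of the form u·y with u ∈ {e, y}* and w contains no factor e³. -/

import Mathlib

/-- The alphabet `A = {x, y, e}`. -/
inductive Alpha : Type
  | x | y | e
  deriving DecidableEq

/-- The defining relations `e³ = e`, `xey = y`, `xe²y = x`, `xy = 1`. -/
def rel : FreeMonoid Alpha → FreeMonoid Alpha → Prop := fun a b =>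
  (a = .of .e * .of .e * .of .e ∧ b = .of .e) ∨
  (a = .of .x * .of .e * .of .y ∧ b = .of .y) ∨
  (a = .of .x * .of .e * .of .e * .of .y ∧ b = .of .x) ∨
  (a = .of .x * .of .y ∧ b = 1)

/-- The monoid `M = ⟨x, y, e | e³ = e, xey = y, xe²y = x, xy = 1⟩`. -/
abbrev M := PresentedMonoid rel

/-- The image of `x` in `M`. -/
def X : M := PresentedMonoid.of rel .x
/-- The image of `y` in `M`. -/
def Y : M := PresentedMonoid.of rel .y
/-- The image of `e` in `M`. -/
def E : M := PresentedMonoid.of rel .e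

/-- The one-step rewriting relation on the free monoid `A*`:
`u·ℓ·v → u·r·v` for each rule `(ℓ, r)`. -/
def Step : FreeMonoid Alpha → FreeMonoid Alpha → Prop := fun a b =>
  ∃ u v l r : FreeMonoid Alpha, rel l r ∧ a = u * l * v ∧ b = u * r * v

/-
Backward direction: `y`, `ey` and `e²y` have the left inverses `x`, `x²` and `x²e`, and a word
of `{e, y}*y` without factor `e³` is a product of these blocks.
Forward direction: `M` acts on words on the left by prepending a letter and reducing at the front.
A left-invertible element acts injectively, while `x` and `e` do not (`x·ey = y = x·yy` and
`e·1 = e = e·ee`), so a nonempty left-invertible word ends in `y`. An irreducible word ending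
in `y` has no `x`: the letters after its last `x` would start with `y`, `ey` or `e²y`.
-/

open Alpha FreeMonoid

namespace Alpha

def actX : List Alpha → List Alpha
  | y :: s => s
  | e :: y :: s => y :: s
  | e :: e :: y :: s => actX s
  | s => x :: s

-- The recursive clause makes `e³ = e` hold on all words, not only on irreducible ones.
def actE : List Alpha → List Alpha
  | e :: e :: s => actE s
  | s => e :: s

theorem actE_actE_actE (s : List Alpha) : actE (actE (actE s)) = actE s := by
  induction s using actE.induct with
  | case1 s ih => simpa [actE] using ih
  | case2 s hs =>
    rcases s with _ | ⟨_ | _ | _, _ | ⟨_ | _ | _, s⟩⟩ <;> simp_all [actE]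

def act : Alpha → Function.End (List Alpha)
  | x => actX
  | y => List.cons y
  | e => actE

end Alpha

def leftAction : M →* Function.End (List Alpha) :=
  PresentedMonoid.lift act <| by
    rintro _ _ (⟨rfl, rfl⟩ | ⟨rfl, rfl⟩ | ⟨rfl, rfl⟩ | ⟨rfl, rfl⟩)
    · exact funext actE_actE_actE
    all_goals rfl

theorem MonoidHom.injective_apply_of_mul_eq_one {α N : Type*} [Monoid N]
    (φ : N →* Function.End α) {p p' : N} (h : p' * p = 1) : Function.Injective (φ p) :=
  Function.LeftInverse.injective (g := φ p') <|
    congrFun (show φ p' * φ p = 1 by rw [← map_mul, h, map_one])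

theorem Alpha.injective_act_iff {a : Alpha} : Function.Injective (act a) ↔ a = y := by
  refine ⟨fun h => ?_, fun h => h ▸ List.cons_injective⟩
  cases a with
  | x => exact absurd (@h [e, y] [y, y] rfl) (by simp)
  | y => rfl
  | e => exact absurd (@h [] [e, e] rfl) (by simp)

theorem eq_y_of_mul_mk_mul_of_eq_one {p' : M} {u : FreeMonoid Alpha} {c : Alpha}
    (h : p' * PresentedMonoid.mk rel (u * of c) = 1) : c = y :=
  injective_act_iff.1 <|
    leftAction.injective_apply_of_mul_eq_one (p' := p' * PresentedMonoid.mk rel u)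
      (by rwa [map_mul, ← mul_assoc] at h)

theorem X_mul_Y : X * Y = 1 :=
  PresentedMonoid.mk_eq_mk_of_rel (Or.inr (Or.inr (Or.inr ⟨rfl, rfl⟩)))

theorem X_mul_E_mul_Y : X * E * Y = Y :=
  PresentedMonoid.mk_eq_mk_of_rel (Or.inr (Or.inl ⟨rfl, rfl⟩))

theorem E_mul_E_mul_E : E * E * E = E :=
  PresentedMonoid.mk_eq_mk_of_rel (Or.inl ⟨rfl, rfl⟩)

theorem exists_mul_mul_eq_one {N : Type*} [Monoid N] {a b : N} (ha : ∃ a', a' * a = 1)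
    (hb : ∃ b', b' * b = 1) : ∃ c, c * (a * b) = 1 := by
  obtain ⟨a', ha⟩ := ha
  obtain ⟨b', hb⟩ := hb
  exact ⟨b' * a', by rw [mul_assoc, ← mul_assoc a', ha, one_mul, hb]⟩

theorem exists_mul_Y_eq_one : ∃ p, p * Y = 1 := ⟨X, X_mul_Y⟩

theorem exists_mul_E_mul_Y_eq_one : ∃ p, p * (E * Y) = 1 :=
  ⟨X * X, by rw [mul_assoc, ← mul_assoc X E Y, X_mul_E_mul_Y, X_mul_Y]⟩

theorem exists_mul_E_mul_E_mul_Y_eq_one : ∃ p, p * (E * E * Y) = 1 :=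
  ⟨X * X * E, by
    rw [show X * X * E * (E * E * Y) = X * (X * (E * E * E) * Y) by simp only [mul_assoc],
      E_mul_E_mul_E, X_mul_E_mul_Y, X_mul_Y]⟩

theorem exists_mul_mk_mul_Y_eq_one : ∀ u : List Alpha, (∀ a ∈ u, a = e ∨ a = y) →
    ¬ [e, e, e] <:+: u → ∃ p : M, p * (PresentedMonoid.mk rel (ofList u) * Y) = 1
  | [], _, _ => exists_mul_Y_eq_one
  | y :: u, hu, heee =>
    exists_mul_mul_eq_one (a := Y) exists_mul_Y_eq_one <| exists_mul_mk_mul_Y_eq_one u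
      (fun a ha => hu a (by simp [ha])) (fun h => heee (List.infix_cons h))
  | [e], _, _ => exists_mul_E_mul_Y_eq_one
  | e :: y :: u, hu, heee =>
    exists_mul_mul_eq_one (a := E * Y) exists_mul_E_mul_Y_eq_one <| exists_mul_mk_mul_Y_eq_one u
      (fun a ha => hu a (by simp [ha])) (fun h => heee (List.infix_cons (List.infix_cons h)))
  | [e, e], _, _ => exists_mul_E_mul_E_mul_Y_eq_one
  | e :: e :: y :: u, hu, heee =>
    exists_mul_mul_eq_one (a := E * E * Y) exists_mul_E_mul_E_mul_Y_eq_one <|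
      exists_mul_mk_mul_Y_eq_one u (fun a ha => hu a (by simp [ha]))
        (fun h => heee (List.infix_cons (List.infix_cons (List.infix_cons h))))
  | e :: e :: e :: u, _, heee => absurd (List.prefix_append [e, e, e] u).isInfix heee
  | x :: _, hu, _ | e :: x :: _, hu, _ | e :: e :: x :: _, hu, _ => by simpa using hu x

def IsReducedWord (s : List Alpha) : Prop := ∀ l r, rel l r → ¬ l.toList <:+: s

theorem isReducedWord_toList {w : FreeMonoid Alpha} (hw : ¬ ∃ w', Step w w') :
    IsReducedWord w.toList := by
  rintro l r hlr ⟨s, t, hst⟩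
  exact hw ⟨_, ofList s, ofList t, l, r, hlr, by rw [← ofList_toList w, ← hst]; rfl, rfl⟩

theorem IsReducedWord.of_cons {a : Alpha} {s : List Alpha} (h : IsReducedWord (a :: s)) :
    IsReducedWord s :=
  fun l r hlr hl => h l r hlr (List.infix_cons hl)

theorem IsReducedWord.not_prefix {s : List Alpha} (h : IsReducedWord s) {l r : FreeMonoid Alpha}
    (hlr : rel l r) : ¬ l.toList <+: s :=
  fun hl => h l r hlr hl.isInfix

theorem IsReducedWord.forall_mem_of_append_y : ∀ {u : List Alpha}, IsReducedWord (u ++ [y]) →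
    ∀ a ∈ u, a = e ∨ a = y
  | [], _ => by simp
  | a :: t, hr => by
    have ht := IsReducedWord.forall_mem_of_append_y hr.of_cons
    refine List.forall_mem_cons.2 ⟨?_, ht⟩
    cases a with
    | e => exact .inl rfl
    | y => exact .inr rfl
    | x =>
      have hxy := hr.not_prefix (.inr (.inr (.inr ⟨rfl, rfl⟩)))
      have hxey := hr.not_prefix (.inr (.inl ⟨rfl, rfl⟩))
      have hxeey := hr.not_prefix (.inr (.inr (.inl ⟨rfl, rfl⟩)))
      have heee := hr.of_cons.not_prefix (.inl ⟨rfl, rfl⟩)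
      rcases t with _ | ⟨_ | _ | _, _ | ⟨_ | _ | _, _ | ⟨_ | _ | _, t⟩⟩⟩ <;> simp_all

/-- For irreducible `w`, the image of `w` in `M` is left-invertible iff `w` is
empty or of the form `u·y` with `u ∈ {e,y}*` and `w` has no factor `e³`. -/
theorem stmt_9 (w : FreeMonoid Alpha) (hw : ¬ ∃ w' : FreeMonoid Alpha, Step w w') :
    (∃ p' : M, p' * PresentedMonoid.mk rel w = 1) ↔
    (w = 1 ∨
      ((∃ u : FreeMonoid Alpha, (∀ a ∈ u.toList, a = Alpha.e ∨ a = Alpha.y) ∧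
          w = u * .of .y) ∧
        ¬ ∃ p q : FreeMonoid Alpha,
          w = p * (.of .e * .of .e * .of .e) * q)) := by
  constructor
  · rintro ⟨p', hp'⟩
    refine or_iff_not_imp_left.2 fun hw_ne =>
      ⟨?_, fun ⟨p, q, h⟩ => hw ⟨_, p, q, _, _, .inl ⟨rfl, rfl⟩, h, rfl⟩⟩
    obtain ⟨u, c, hc⟩ := w.toList.eq_nil_or_concat.resolve_left hw_ne
    obtain rfl : w = ofList u * of c := by
      rw [← ofList_toList w, hc, List.concat_eq_append]; rfl
    obtain rfl := eq_y_of_mul_mk_mul_of_eq_one hp'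
    exact ⟨ofList u, (isReducedWord_toList hw).forall_mem_of_append_y, rfl⟩
  · rintro (rfl | ⟨⟨u, hu, rfl⟩, heee⟩)
    · exact ⟨1, by simp⟩
    · exact exists_mul_mk_mul_Y_eq_one u.toList hu fun ⟨s, t, h⟩ =>
        heee ⟨ofList s, ofList t * of y, by
          rw [← ofList_toList u, ← h]; simp [ofList_cons, mul_assoc]⟩
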